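/- Let d ≥ 2 be an integer and let K, L, M, N be Hermitian matrices on ℂ^{d_Â}⊗ℂ^{d_B̂}. On the space with tensor factors A, B, Â, B̂, A', B' (A, B, A', B' each of dimension d), define L̃ := Φ_{AB'}⊗Φ_{BA'}⊗K + Φ_{AB'}⊗((I−Φ)_{BA'}/(d²−1))⊗L + ((I−Φ)_{AB'}/(d²−1))⊗Φ_{BA'}⊗M + ((I−Φ)_{AB'}/(d²−1))⊗((I−Φ)_{BA'}/(d²−1))⊗N, where Φ_{AB'} denotes the maximally entangled state placed on the factors A and B', and Φ_{BA'} that placed on B and A'. Then L̃ is positive semidefinite and Tr_{A'B'}[L̃] = I_{ABÂB̂} if and only if K, L, M, N are all positive semidefinite and K + L + M + N = d²·I. -/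

import Mathlib

open Matrix Kronecker
open scoped ComplexOrder

noncomputable section

/-- The square root of a positive semidefinite matrix, as `Matrix.PosSemidef.sqrt` was defined
in the older Mathlib. -/
def psdSqrt {n : Type*} [Fintype n] [DecidableEq n] {A : Matrix n n ℂ} (hA : A.PosSemidef) :
    Matrix n n ℂ :=
  (hA.1.eigenvectorUnitary : Matrix n n ℂ) * diagonal ((↑) ∘ (Real.sqrt ·) ∘ hA.1.eigenvalues) *
    (star hA.1.eigenvectorUnitary : Matrix n n ℂ)

/-- The trace norm `‖X‖₁ = Tr[√(X†X)]`. -/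
def traceNorm {n : Type*} [Fintype n] [DecidableEq n] (X : Matrix n n ℂ) : ℝ :=
  (psdSqrt (Matrix.posSemidef_conjTranspose_mul_self X)).trace.re

/-- The extension `id_k ⊗ Φ` of a map on matrices, with the identity on the first factor. -/
def idTensor {k n m : Type*} (Φ : Matrix n n ℂ → Matrix m m ℂ)
    (M : Matrix (k × n) (k × n) ℂ) : Matrix (k × m) (k × m) ℂ :=
  Matrix.of fun p q => Φ (Matrix.of fun a b => M (p.1, a) (q.1, b)) p.2 q.2

/-- A density matrix: positive semidefinite with unit trace. -/
def IsState {n : Type*} [Fintype n] (ρ : Matrix n n ℂ) : Prop :=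
  ρ.PosSemidef ∧ ρ.trace = 1

/-- Normalized diamond distance between two maps on matrices, as the supremum over
bipartite input states (with a reference system of the same dimension as the input)
of the normalized trace distance of the outputs. -/
def dDist {n m : Type*} [Fintype n] [DecidableEq n] [Fintype m] [DecidableEq m]
    (N M : Matrix n n ℂ → Matrix m m ℂ) : ℝ :=
  sSup {x : ℝ | ∃ ρ : Matrix (n × n) (n × n) ℂ, IsState ρ ∧
    x = (1 / 2) * traceNorm (idTensor N ρ - idTensor M ρ)}

/-- Complete positivity of a linear map on matrices: every finite identity extension
preserves positive semidefiniteness. -/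
def IsCP {n m : Type*} [Fintype n] [DecidableEq n] [Fintype m] [DecidableEq m]
    (Φ : Matrix n n ℂ →ₗ[ℂ] Matrix m m ℂ) : Prop :=
  ∀ (r : ℕ) (M : Matrix (Fin r × n) (Fin r × n) ℂ), M.PosSemidef →
    (idTensor (fun X => Φ X) M).PosSemidef

/-- Trace preservation of a linear map on matrices. -/
def IsTP {n m : Type*} [Fintype n] [Fintype m]
    (Φ : Matrix n n ℂ →ₗ[ℂ] Matrix m m ℂ) : Prop :=
  ∀ X, (Φ X).trace = X.trace

/-- Choi operator of a map on matrices: `Γ^Φ = Σ_{i,j} |i⟩⟨j| ⊗ Φ(|i⟩⟨j|)`. -/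
def choi {n m : Type*} [DecidableEq n]
    (Φ : Matrix n n ℂ → Matrix m m ℂ) : Matrix (n × m) (n × m) ℂ :=
  Matrix.of fun p q => Φ (Matrix.single p.1 q.1 1) p.2 q.2

/-- The swap operator `F = Σ_{i,j} |i⟩⟨j| ⊗ |j⟩⟨i|` on `ℂ^d ⊗ ℂ^d`. -/
def swapOp (d : ℕ) : Matrix (Fin d × Fin d) (Fin d × Fin d) ℂ :=
  Matrix.of fun p q => if p.1 = q.2 ∧ p.2 = q.1 then 1 else 0

/-- The swap channel `S^d(X) = F X F†`. -/
def swapCh (d : ℕ) (X : Matrix (Fin d × Fin d) (Fin d × Fin d) ℂ) :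
    Matrix (Fin d × Fin d) (Fin d × Fin d) ℂ :=
  swapOp d * X * (swapOp d)ᴴ

/-- Square root of a positive semidefinite matrix (junk value `0` otherwise). -/
def msqrt {n : Type*} [Fintype n] [DecidableEq n] (X : Matrix n n ℂ) : Matrix n n ℂ :=
  letI := Classical.propDecidable X.PosSemidef
  if h : X.PosSemidef then psdSqrt h else 0

/-- Fidelity `F(ω,τ) = ‖√ω √τ‖₁²`. -/
def fid {n : Type*} [Fintype n] [DecidableEq n] (ω τ : Matrix n n ℂ) : ℝ :=
  (traceNorm (msqrt ω * msqrt τ)) ^ 2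

/-- Channel fidelity: the infimum of output fidelities over bipartite input states. -/
def cFid {n m : Type*} [Fintype n] [DecidableEq n] [Fintype m] [DecidableEq m]
    (N M : Matrix n n ℂ → Matrix m m ℂ) : ℝ :=
  sInf {x : ℝ | ∃ ρ : Matrix (n × n) (n × n) ℂ, IsState ρ ∧
    x = fid (idTensor N ρ) (idTensor M ρ)}

/-- Partial trace over the second (right) factor. -/
def ptrR {a b : Type*} [Fintype b] (X : Matrix (a × b) (a × b) ℂ) : Matrix a a ℂ :=
  Matrix.of fun i j => ∑ k, X (i, k) (j, k)

/-- Unnormalized maximally entangled operator `Γ = |Γ⟩⟨Γ|` on `ℂ^D ⊗ ℂ^D`. -/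
def gamOp (D : ℕ) : Matrix (Fin D × Fin D) (Fin D × Fin D) ℂ :=
  Matrix.of fun p q => if p.1 = p.2 ∧ q.1 = q.2 then 1 else 0

/-- Maximally entangled state `Φ = Γ/D` on `ℂ^D ⊗ ℂ^D`. -/
def phiD (D : ℕ) : Matrix (Fin D × Fin D) (Fin D × Fin D) ℂ :=
  ((D : ℂ))⁻¹ • gamOp D

/-- Partial transpose over Bob's factors `B, B̂, B'` of a matrix on the six factors
`(A ⊗ B) ⊗ (Â ⊗ B̂) ⊗ (A' ⊗ B')`. -/
def ptB6 {A B AH BH A' B' : Type*}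
    (X : Matrix (((A × B) × (AH × BH)) × (A' × B')) (((A × B) × (AH × BH)) × (A' × B')) ℂ) :
    Matrix (((A × B) × (AH × BH)) × (A' × B')) (((A × B) × (AH × BH)) × (A' × B')) ℂ :=
  Matrix.of fun p q =>
    X (((p.1.1.1, q.1.1.2), (p.1.2.1, q.1.2.2)), (p.2.1, q.2.2))
      (((q.1.1.1, p.1.1.2), (q.1.2.1, p.1.2.2)), (q.2.1, p.2.2))

/-- Partial transpose over the factor `B̂` of a matrix on `Â ⊗ B̂`. -/
def ptBh2 {AH BH : Type*} (X : Matrix (AH × BH) (AH × BH) ℂ) : Matrix (AH × BH) (AH × BH) ℂ :=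
  Matrix.of fun g g' => X (g.1, g'.2) (g'.1, g.2)

/-- Contraction `Tr_{ÂB̂}[(T_{ÂB̂}(ρ) ⊗ I) P]` of a six-factor operator with a resource state,
yielding the Choi operator of the induced channel `ω ↦ P(ω ⊗ ρ)`. -/
def contractRes {A B AH BH A' B' : Type*} [Fintype AH] [Fintype BH]
    (ρ : Matrix (AH × BH) (AH × BH) ℂ)
    (P : Matrix (((A × B) × (AH × BH)) × (A' × B')) (((A × B) × (AH × BH)) × (A' × B')) ℂ) :
    Matrix ((A × B) × (A' × B')) ((A × B) × (A' × B')) ℂ :=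
  Matrix.of fun p q => ∑ h, ∑ h', ρ h h' * P ((p.1, h), p.2) ((q.1, h'), q.2)


/-- The six-factor operator `E1_{AB'} ⊗ E1_{BA'} ⊗ K + E1_{AB'} ⊗ E2_{BA'} ⊗ L
+ E2_{AB'} ⊗ E1_{BA'} ⊗ M + E2_{AB'} ⊗ E2_{BA'} ⊗ N` on the factors
`A, B, Â, B̂, A', B'` (with `E1, E2` placed on the indicated pairs of factors). -/
def bigOp (d : ℕ) {AH BH : Type*} (E1 E2 : Matrix (Fin d × Fin d) (Fin d × Fin d) ℂ)
    (K L M N : Matrix (AH × BH) (AH × BH) ℂ) :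
    Matrix (((Fin d × Fin d) × (AH × BH)) × (Fin d × Fin d))
      (((Fin d × Fin d) × (AH × BH)) × (Fin d × Fin d)) ℂ :=
  Matrix.of fun r c =>
    E1 (r.1.1.1, r.2.2) (c.1.1.1, c.2.2) * E1 (r.1.1.2, r.2.1) (c.1.1.2, c.2.1) * K r.1.2 c.1.2
    + E1 (r.1.1.1, r.2.2) (c.1.1.1, c.2.2) * E2 (r.1.1.2, r.2.1) (c.1.1.2, c.2.1) * L r.1.2 c.1.2
    + E2 (r.1.1.1, r.2.2) (c.1.1.1, c.2.2) * E1 (r.1.1.2, r.2.1) (c.1.1.2, c.2.1) * M r.1.2 c.1.2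
    + E2 (r.1.1.1, r.2.2) (c.1.1.1, c.2.2) * E2 (r.1.1.2, r.2.1) (c.1.1.2, c.2.1) * N r.1.2 c.1.2


/-! Regroup the six factors as `(A B') ⊗ (B A') ⊗ (Â B̂)`: the operator becomes
`Φ⊗Φ⊗K + Φ⊗Φ⊥⊗L + Φ⊥⊗Φ⊗M + Φ⊥⊗Φ⊥⊗N` with `Φ⊥ = (I − Φ)/(d² − 1)`. Both `Φ` and `Φ⊥` are
positive and have partial trace `I/d`, so the partial trace over `A'B'` is `I/d² ⊗ (K+L+M+N)`,
and positivity of `K, L, M, N` gives positivity of the sum. Conversely, `|Γ⟩` is fixed by `Φ` and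
killed by `Φ⊥`, while `|0⟩|1⟩` is killed by `Φ`; evaluating the quadratic form on product vectors
`x ⊗ y ⊗ v` with `x, y ∈ {|Γ⟩, |0⟩|1⟩}` isolates each of `K, L, M, N`. -/

def kroneckerVec {R m n : Type*} [Mul R] (x : m → R) (y : n → R) : m × n → R :=
  fun p => x p.1 * y p.2

section KroneckerVec

variable {R m n : Type*} [CommSemiring R]

theorem star_kroneckerVec [StarRing R] (x : m → R) (y : n → R) :
    star (kroneckerVec x y) = kroneckerVec (star x) (star y) := by
  funext p
  simp [kroneckerVec]

variable [Fintype m] [Fintype n]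

theorem kronecker_mulVec_kroneckerVec (A : Matrix m m R) (B : Matrix n n R) (x : m → R)
    (y : n → R) : (A ⊗ₖ B) *ᵥ kroneckerVec x y = kroneckerVec (A *ᵥ x) (B *ᵥ y) := by
  funext ⟨i, j⟩
  simp only [kroneckerVec, mulVec, dotProduct, Fintype.sum_prod_type, kroneckerMap_apply,
    Finset.sum_mul_sum]
  exact Finset.sum_congr rfl fun _ _ => Finset.sum_congr rfl fun _ _ => by ring

theorem kroneckerVec_dotProduct_kroneckerVec (x x' : m → R) (y y' : n → R) :
    kroneckerVec x y ⬝ᵥ kroneckerVec x' y' = (x ⬝ᵥ x') * (y ⬝ᵥ y') := by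
  simp only [kroneckerVec, dotProduct, Fintype.sum_prod_type, Finset.sum_mul_sum]
  exact Finset.sum_congr rfl fun _ _ => Finset.sum_congr rfl fun _ _ => by ring

theorem star_kroneckerVec_dotProduct_kronecker_mulVec [StarRing R] (A : Matrix m m R)
    (B : Matrix n n R) (x : m → R) (y : n → R) :
    star (kroneckerVec x y) ⬝ᵥ (A ⊗ₖ B) *ᵥ kroneckerVec x y
      = (star x ⬝ᵥ A *ᵥ x) * (star y ⬝ᵥ B *ᵥ y) := by
  rw [star_kroneckerVec, kronecker_mulVec_kroneckerVec, kroneckerVec_dotProduct_kroneckerVec]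

end KroneckerVec

theorem Matrix.one_kronecker_inj {R m n : Type*} [MulZeroOneClass R] [DecidableEq m] [Nonempty m]
    {A B : Matrix n n R} : (1 : Matrix m m R) ⊗ₖ A = 1 ⊗ₖ B ↔ A = B := by
  refine ⟨fun h => ?_, congrArg _⟩
  obtain ⟨i⟩ := ‹Nonempty m›
  ext j k
  simpa using congrFun (congrFun h (i, j)) (i, k)

theorem Matrix.PosSemidef.of_isHermitian_of_isIdempotentElem {n R : Type*} [Fintype n]
    [CommRing R] [PartialOrder R] [StarRing R] [StarOrderedRing R] {P : Matrix n n R}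
    (hP : P.IsHermitian) (hP2 : IsIdempotentElem P) : P.PosSemidef := by
  have h : P = Pᴴ * P := by rw [hP.eq, hP2.eq]
  exact h ▸ posSemidef_conjTranspose_mul_self P

theorem Matrix.PosSemidef.of_pos_mul_dotProduct_mulVec_nonneg {n 𝕜 : Type*} [Fintype n]
    [RCLike 𝕜] {A : Matrix n n 𝕜} (hA : A.IsHermitian) {c : 𝕜} (hc : 0 < c)
    (h : ∀ v, 0 ≤ c * (star v ⬝ᵥ A *ᵥ v)) : A.PosSemidef :=
  .of_dotProduct_mulVec_nonneg hA fun v => le_of_mul_le_mul_left (by simpa using h v) hc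

theorem ptrR_one {a b : Type*} [DecidableEq a] [DecidableEq b] [Fintype b] :
    ptrR (1 : Matrix (a × b) (a × b) ℂ) = (Fintype.card b : ℂ) • 1 := by
  ext i j
  by_cases h : i = j <;> simp [ptrR, one_apply, h]

theorem ptrR_smul {a b : Type*} [Fintype b] (c : ℂ) (X : Matrix (a × b) (a × b) ℂ) :
    ptrR (c • X) = c • ptrR X := by
  ext i j
  simp [ptrR, Finset.mul_sum]

theorem ptrR_sub {a b : Type*} [Fintype b] (X Y : Matrix (a × b) (a × b) ℂ) :
    ptrR (X - Y) = ptrR X - ptrR Y := by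
  ext i j
  simp [ptrR]

section MaximallyEntangled

variable (D : ℕ)

def gamVec : Fin D × Fin D → ℂ := fun p => if p.1 = p.2 then 1 else 0

def phiPerp : Matrix (Fin D × Fin D) (Fin D × Fin D) ℂ := ((D : ℂ) ^ 2 - 1)⁻¹ • (1 - phiD D)

theorem star_gamVec : star (gamVec D) = gamVec D := by
  funext p
  simp [gamVec, apply_ite]

theorem gamOp_eq_vecMulVec : gamOp D = vecMulVec (gamVec D) (gamVec D) := by
  ext p q
  by_cases hp : p.1 = p.2 <;> simp [gamOp, gamVec, vecMulVec_apply, hp]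

theorem gamVec_dotProduct_gamVec : gamVec D ⬝ᵥ gamVec D = D := by
  simp [gamVec, dotProduct, Fintype.sum_prod_type]

theorem gamVec_dotProduct_single {i j : Fin D} (h : i ≠ j) :
    gamVec D ⬝ᵥ Pi.single (i, j) 1 = 0 := by
  simp [gamVec, h]

theorem ptrR_gamOp : ptrR (gamOp D) = 1 := by
  ext i j
  by_cases h : i = j
  · subst h
    simp [ptrR, gamOp, Finset.filter_eq]
  · have hk : ∀ k, ¬(i = k ∧ j = k) := fun k hk => h (hk.1.trans hk.2.symm)
    simp [ptrR, gamOp, one_apply, h, hk]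

theorem star_dotProduct_phiD_mulVec (x : Fin D × Fin D → ℂ) :
    star x ⬝ᵥ phiD D *ᵥ x = (D : ℂ)⁻¹ * (star x ⬝ᵥ gamVec D) * (gamVec D ⬝ᵥ x) := by
  rw [phiD, gamOp_eq_vecMulVec, smul_mulVec, vecMulVec_mulVec]
  simp [dotProduct_smul, mul_comm, mul_left_comm]

theorem isIdempotentElem_phiD (hD : D ≠ 0) : IsIdempotentElem (phiD D) := by
  rw [IsIdempotentElem, phiD, gamOp_eq_vecMulVec, smul_mul_smul_comm, vecMulVec_mul_vecMulVec,
    gamVec_dotProduct_gamVec, vecMulVec_smul, smul_smul]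
  congr 1
  field_simp

theorem posSemidef_phiD : (phiD D).PosSemidef := by
  rw [phiD, gamOp_eq_vecMulVec]
  nth_rw 2 [← star_gamVec]
  exact (posSemidef_vecMulVec_self_star _).smul (by positivity)

theorem isHermitian_phiD : (phiD D).IsHermitian :=
  (posSemidef_phiD D).isHermitian

theorem ptrR_phiD : ptrR (phiD D) = (D : ℂ)⁻¹ • 1 := by
  rw [phiD, ptrR_smul, ptrR_gamOp]

variable {D}

theorem natCast_sq_sub_one (hD : D ≠ 0) : (D : ℂ) ^ 2 - 1 = ((D ^ 2 - 1 : ℕ) : ℂ) := by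
  rw [Nat.cast_sub (Nat.one_le_pow _ _ (Nat.pos_of_ne_zero hD)), Nat.cast_pow, Nat.cast_one]

theorem inv_natCast_sq_sub_one_pos (hD : 2 ≤ D) : 0 < ((D : ℂ) ^ 2 - 1)⁻¹ := by
  rw [natCast_sq_sub_one (by omega)]
  exact RCLike.inv_pos_of_pos (Nat.cast_pos.mpr (Nat.sub_pos_of_lt (by nlinarith)))

theorem posSemidef_phiPerp (hD : D ≠ 0) : (phiPerp D).PosSemidef := by
  have hproj : (1 - phiD D).PosSemidef :=
    .of_isHermitian_of_isIdempotentElem (isHermitian_one.sub (isHermitian_phiD D))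
      (isIdempotentElem_phiD D hD).one_sub
  rw [phiPerp, natCast_sq_sub_one hD]
  exact hproj.smul (by positivity)

theorem ptrR_phiPerp (hD : 2 ≤ D) : ptrR (phiPerp D) = (D : ℂ)⁻¹ • 1 := by
  have hD0 : (D : ℂ) ≠ 0 := by exact_mod_cast (show D ≠ 0 by omega)
  have hD1 : (D : ℂ) ^ 2 - 1 ≠ 0 := by
    rw [sub_ne_zero]
    exact_mod_cast (show D ^ 2 ≠ 1 by nlinarith)
  rw [phiPerp, ptrR_smul, ptrR_sub, ptrR_one, ptrR_phiD, Fintype.card_fin, ← sub_smul, smul_smul]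
  congr 1
  field_simp

theorem star_dotProduct_phiPerp_mulVec (x : Fin D × Fin D → ℂ) :
    star x ⬝ᵥ phiPerp D *ᵥ x = ((D : ℂ) ^ 2 - 1)⁻¹ * (star x ⬝ᵥ x - star x ⬝ᵥ phiD D *ᵥ x) := by
  rw [phiPerp, smul_mulVec, sub_mulVec, one_mulVec, dotProduct_smul, dotProduct_sub, smul_eq_mul]

theorem star_gamVec_dotProduct_phiD_mulVec (hD : D ≠ 0) :
    star (gamVec D) ⬝ᵥ phiD D *ᵥ gamVec D = D := by
  rw [star_dotProduct_phiD_mulVec, star_gamVec, gamVec_dotProduct_gamVec]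
  field_simp [show (D : ℂ) ≠ 0 by exact_mod_cast hD]

theorem star_gamVec_dotProduct_phiPerp_mulVec (hD : D ≠ 0) :
    star (gamVec D) ⬝ᵥ phiPerp D *ᵥ gamVec D = 0 := by
  rw [star_dotProduct_phiPerp_mulVec, star_gamVec_dotProduct_phiD_mulVec hD, star_gamVec,
    gamVec_dotProduct_gamVec, sub_self, mul_zero]

theorem star_single_dotProduct_phiD_mulVec {i j : Fin D} (h : i ≠ j) :
    star (Pi.single (i, j) 1) ⬝ᵥ phiD D *ᵥ Pi.single (i, j) 1 = 0 := by
  rw [star_dotProduct_phiD_mulVec, gamVec_dotProduct_single D h, mul_zero]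

theorem star_single_dotProduct_phiPerp_mulVec {i j : Fin D} (h : i ≠ j) :
    star (Pi.single (i, j) 1) ⬝ᵥ phiPerp D *ᵥ Pi.single (i, j) 1 = ((D : ℂ) ^ 2 - 1)⁻¹ := by
  rw [star_dotProduct_phiPerp_mulVec, star_single_dotProduct_phiD_mulVec h]
  simp

end MaximallyEntangled

section BigOp

variable {d : ℕ} {AH BH : Type*}

/-- Reorders the factors `A B Â B̂ A' B'` as `(A B') (B A') (Â B̂)`. -/
def bigOpEquiv (d : ℕ) (AH BH : Type*) :
    ((Fin d × Fin d) × (AH × BH)) × (Fin d × Fin d) ≃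
      ((Fin d × Fin d) × (Fin d × Fin d)) × (AH × BH) where
  toFun r := (((r.1.1.1, r.2.2), (r.1.1.2, r.2.1)), r.1.2)
  invFun s := (((s.1.1.1, s.1.2.1), s.2), (s.1.2.2, s.1.1.2))
  left_inv _ := rfl
  right_inv _ := rfl

theorem bigOp_eq_submatrix (E1 E2 : Matrix (Fin d × Fin d) (Fin d × Fin d) ℂ)
    (K L M N : Matrix (AH × BH) (AH × BH) ℂ) :
    bigOp d E1 E2 K L M N =
      ((E1 ⊗ₖ E1) ⊗ₖ K + (E1 ⊗ₖ E2) ⊗ₖ L + (E2 ⊗ₖ E1) ⊗ₖ M + (E2 ⊗ₖ E2) ⊗ₖ N).submatrix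
        (bigOpEquiv d AH BH) (bigOpEquiv d AH BH) :=
  rfl

theorem ptrR_bigOp [Fintype AH] [Fintype BH] (E1 E2 : Matrix (Fin d × Fin d) (Fin d × Fin d) ℂ)
    (K L M N : Matrix (AH × BH) (AH × BH) ℂ) :
    ptrR (bigOp d E1 E2 K L M N) =
      (ptrR E1 ⊗ₖ ptrR E1) ⊗ₖ K + (ptrR E1 ⊗ₖ ptrR E2) ⊗ₖ L + (ptrR E2 ⊗ₖ ptrR E1) ⊗ₖ M +
        (ptrR E2 ⊗ₖ ptrR E2) ⊗ₖ N := by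
  ext r c
  simp only [ptrR, bigOp, of_apply, Matrix.add_apply, kroneckerMap_apply,
    Fintype.sum_prod_type, Finset.sum_add_distrib, Finset.sum_mul, Finset.mul_sum]

variable {E1 E2 : Matrix (Fin d × Fin d) (Fin d × Fin d) ℂ}
  {K L M N : Matrix (AH × BH) (AH × BH) ℂ}

theorem posSemidef_bigOp_iff :
    (bigOp d E1 E2 K L M N).PosSemidef ↔
      ((E1 ⊗ₖ E1) ⊗ₖ K + (E1 ⊗ₖ E2) ⊗ₖ L + (E2 ⊗ₖ E1) ⊗ₖ M + (E2 ⊗ₖ E2) ⊗ₖ N).PosSemidef := by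
  rw [bigOp_eq_submatrix, posSemidef_submatrix_equiv]

variable [Fintype AH] [Fintype BH]

theorem posSemidef_bigOp (hE1 : E1.PosSemidef) (hE2 : E2.PosSemidef) (hK : K.PosSemidef)
    (hL : L.PosSemidef) (hM : M.PosSemidef) (hN : N.PosSemidef) :
    (bigOp d E1 E2 K L M N).PosSemidef :=
  posSemidef_bigOp_iff.mpr <|
    (((hE1.kronecker hE1).kronecker hK).add ((hE1.kronecker hE2).kronecker hL)).add
      ((hE2.kronecker hE1).kronecker hM) |>.add ((hE2.kronecker hE2).kronecker hN)

theorem posSemidef_of_posSemidef_bigOp (hK : K.IsHermitian) (hL : L.IsHermitian)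
    (hM : M.IsHermitian) (hN : N.IsHermitian) {x y : Fin d × Fin d → ℂ}
    (hx1 : 0 < star x ⬝ᵥ E1 *ᵥ x) (hx2 : star x ⬝ᵥ E2 *ᵥ x = 0)
    (hy1 : star y ⬝ᵥ E1 *ᵥ y = 0) (hy2 : 0 < star y ⬝ᵥ E2 *ᵥ y)
    (h : (bigOp d E1 E2 K L M N).PosSemidef) :
    K.PosSemidef ∧ L.PosSemidef ∧ M.PosSemidef ∧ N.PosSemidef := by
  rw [posSemidef_bigOp_iff] at h
  have hprod (u w : Fin d × Fin d → ℂ) (v : AH × BH → ℂ) :=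
    h.dotProduct_mulVec_nonneg (kroneckerVec (kroneckerVec u w) v)
  simp only [add_mulVec, dotProduct_add, star_kroneckerVec_dotProduct_kronecker_mulVec] at hprod
  refine ⟨.of_pos_mul_dotProduct_mulVec_nonneg hK (mul_pos hx1 hx1) fun v => ?_,
    .of_pos_mul_dotProduct_mulVec_nonneg hL (mul_pos hx1 hy2) fun v => ?_,
    .of_pos_mul_dotProduct_mulVec_nonneg hM (mul_pos hy2 hx1) fun v => ?_,
    .of_pos_mul_dotProduct_mulVec_nonneg hN (mul_pos hy2 hy2) fun v => ?_⟩
  · simpa [hx2] using hprod x x v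
  · simpa [hx2, hy1] using hprod x y v
  · simpa [hx2, hy1] using hprod y x v
  · simpa [hy1] using hprod y y v

theorem ptrR_bigOp_eq_one_iff [NeZero d] [DecidableEq AH] [DecidableEq BH] {c : ℂ} (hc : c ≠ 0)
    (hE1 : ptrR E1 = c • 1) (hE2 : ptrR E2 = c • 1) :
    ptrR (bigOp d E1 E2 K L M N) = 1 ↔ K + L + M + N = (c ^ 2)⁻¹ • 1 := by
  rw [ptrR_bigOp, hE1, hE2, ← kronecker_add, ← kronecker_add, ← kronecker_add, smul_kronecker,
    kronecker_smul, smul_smul, one_kronecker_one, smul_kronecker,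
    ← eq_inv_smul_iff₀ (mul_ne_zero hc hc),
    ← one_kronecker_one (m := Fin d × Fin d) (n := AH × BH), ← kronecker_smul, one_kronecker_inj,
    sq]

end BigOp

/-- the symmetrized six-factor operator built from `Φ` and
`(I − Φ)/(d² − 1)` is positive semidefinite with partial trace over `A'B'` equal to the
identity if and only if `K, L, M, N` are positive semidefinite with `K+L+M+N = d²·I`. -/
theorem stmt10 (d : ℕ) (hd : 2 ≤ d) {AH BH : Type}
    [Fintype AH] [DecidableEq AH] [Fintype BH] [DecidableEq BH]
    (K L M N : Matrix (AH × BH) (AH × BH) ℂ)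
    (hK : K.IsHermitian) (hL : L.IsHermitian) (hM : M.IsHermitian) (hN : N.IsHermitian) :
    ((bigOp d (phiD d) ((((d : ℂ)) ^ 2 - 1)⁻¹ • (1 - phiD d)) K L M N).PosSemidef ∧
      ptrR (bigOp d (phiD d) ((((d : ℂ)) ^ 2 - 1)⁻¹ • (1 - phiD d)) K L M N) = 1)
      ↔
    (K.PosSemidef ∧ L.PosSemidef ∧ M.PosSemidef ∧ N.PosSemidef ∧
      K + L + M + N = ((d : ℂ) ^ 2) • 1) := by
  have hd0 : d ≠ 0 := by omega
  have : NeZero d := ⟨hd0⟩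
  have h01 : (0 : Fin d) ≠ ⟨1, hd⟩ := by simp [Fin.ext_iff]
  change (bigOp d (phiD d) (phiPerp d) K L M N).PosSemidef ∧
    ptrR (bigOp d (phiD d) (phiPerp d) K L M N) = 1 ↔ _
  rw [ptrR_bigOp_eq_one_iff (inv_ne_zero (Nat.cast_ne_zero.mpr hd0)) (ptrR_phiD d)
    (ptrR_phiPerp hd), inv_pow, inv_inv]
  constructor
  · rintro ⟨hpos, hsum⟩
    obtain ⟨hK', hL', hM', hN'⟩ := posSemidef_of_posSemidef_bigOp hK hL hM hN
      (by rw [star_gamVec_dotProduct_phiD_mulVec hd0]; exact Nat.cast_pos.mpr (by omega))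
      (star_gamVec_dotProduct_phiPerp_mulVec hd0) (star_single_dotProduct_phiD_mulVec h01)
      (by rw [star_single_dotProduct_phiPerp_mulVec h01]; exact inv_natCast_sq_sub_one_pos hd)
      hpos
    exact ⟨hK', hL', hM', hN', hsum⟩
  · rintro ⟨hK', hL', hM', hN', hsum⟩
    exact ⟨posSemidef_bigOp (posSemidef_phiD d) (posSemidef_phiPerp hd0) hK' hL' hM' hN', hsum⟩

end
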